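/- arXiv:2111.06793 — 3 statements merged into one kernel-verified Lean document; each statement's English description precedes it below -/
import Mathlib

section
/- Let Π ⊂ ℝ² be an unbounded open set and let v ∈ L²(Π) be such that the restriction of v to every bounded open subset B of Π belongs to H¹(B). Suppose there exists a family of cutoff functions χ_R ∈ C_c^∞(ℝ²), R > 0, with 0 ≤ χ_R ≤ 1, χ_R = 1 on the ball of radius R, supp χ_R contained in the ball of radius R+1, and |∇χ_R| ≤ c·√(χ_R) for a constant c independent of R. If for every R the Green's identity ∫_Π (|∇v|² χ_R + v̄ ∇v·∇χ_R) dx = k² ∫_Π |v|² χ_R dx holds (as follows from Δv + k²v = 0 in Π with v = 0 on ∂Π), then ∫_Π |∇v|² χ_R dx ≤ C ‖v‖²_{L²(Π)} for a constant C = C(k,c) independent of R; consequently ∇v ∈ L²(Π), i.e. v ∈ H¹(Π). -/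
set_option maxHeartbeats 1000000


open MeasureTheory Set

/-- If `v ∈ L²(Π)` on an unbounded open set `Π ⊆ ℝ²`, `v ∈ H¹` of every bounded open
subset, and there is a family of cutoffs `χ R` (smooth, `0 ≤ χ R ≤ 1`, `χ R = 1` on the
ball of radius `R`, supported in the ball of radius `R+1`, `|∇(χ R)| ≤ c √(χ R)`) for
which the Green's identity `∫_Π (|∇v|² χ_R + v̄ ∇v·∇χ_R) = k² ∫_Π |v|² χ_R` holds,
then `∫_Π |∇v|² χ_R ≤ C ‖v‖²_{L²(Π)}` with `C = C(k,c)` independent of `R`, and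
consequently `∇v ∈ L²(Π)`, i.e. `v ∈ H¹(Π)`. -/
theorem stmt_1 (k c : ℝ) (hk : 0 < k) (hc : 0 < c)
    (Ω : Set (EuclideanSpace ℝ (Fin 2))) (hOpen : IsOpen Ω)
    (hUnbdd : ¬ Bornology.IsBounded Ω)
    (v : EuclideanSpace ℝ (Fin 2) → ℂ)
    (hL2 : IntegrableOn (fun x => ‖v x‖ ^ 2) Ω volume)
    (hH1loc : ∀ B ⊆ Ω, IsOpen B → Bornology.IsBounded B →
      IntegrableOn (fun x => ‖fderiv ℝ v x‖ ^ 2) B volume)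
    (χ : ℝ → EuclideanSpace ℝ (Fin 2) → ℝ)
    (hχsmooth : ∀ R > (0:ℝ), ContDiff ℝ (⊤ : ℕ∞) (χ R))
    (hχ01 : ∀ R > (0:ℝ), ∀ x, 0 ≤ χ R x ∧ χ R x ≤ 1)
    (hχ1 : ∀ R > (0:ℝ), ∀ x ∈ Metric.closedBall (0 : EuclideanSpace ℝ (Fin 2)) R,
      χ R x = 1)
    (hχ0 : ∀ R > (0:ℝ), ∀ x ∉ Metric.closedBall (0 : EuclideanSpace ℝ (Fin 2)) (R + 1),
      χ R x = 0)
    (hχgrad : ∀ R > (0:ℝ), ∀ x, ‖gradient (χ R) x‖ ≤ c * Real.sqrt (χ R x))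
    (hGreen : ∀ R > (0:ℝ),
      (∫ x in Ω, ((‖fderiv ℝ v x‖ ^ 2 * χ R x : ℝ) : ℂ) +
          (starRingEnd ℂ) (v x) * fderiv ℝ v x (gradient (χ R) x)) =
        ((k ^ 2 * ∫ x in Ω, ‖v x‖ ^ 2 * χ R x : ℝ) : ℂ)) :
    ∃ C > (0:ℝ),
      (∀ R > (0:ℝ),
        (∫ x in Ω, ‖fderiv ℝ v x‖ ^ 2 * χ R x) ≤ C * ∫ x in Ω, ‖v x‖ ^ 2) ∧
      IntegrableOn (fun x => ‖fderiv ℝ v x‖ ^ 2) Ω volume := by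
  classical
  set F : EuclideanSpace ℝ (Fin 2) → ℝ := fun x => ‖fderiv ℝ v x‖ ^ 2 with hF
  set M : ℝ := ∫ x in Ω, ‖v x‖ ^ 2 with hMdef
  have hM0 : 0 ≤ M := integral_nonneg fun x => by positivity
  have hFmeas : Measurable F := ((measurable_fderiv ℝ v).norm).pow_const 2
  have hFnn : ∀ x, 0 ≤ F x := fun x => sq_nonneg _
  -- measurable surrogate for v
  set D : Set (EuclideanSpace ℝ (Fin 2)) := {x | DifferentiableAt ℝ v x} with hD
  have hDmeas : MeasurableSet D := measurableSet_of_differentiableAt ℝ v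
  have hvD : ContinuousOn v D := fun x hx => hx.continuousAt.continuousWithinAt
  set w : EuclideanSpace ℝ (Fin 2) → ℂ := D.indicator v with hw
  have hwmeas : AEMeasurable w volume :=
    (aemeasurable_indicator_iff hDmeas).mpr (hvD.aemeasurable hDmeas)
  have hwle : ∀ x, ‖w x‖ ≤ ‖v x‖ := by
    intro x
    by_cases hx : x ∈ D
    · simp [hw, indicator_of_mem hx]
    · simp [hw, indicator_of_notMem hx]
  -- the key estimate, uniform in R
  have key : ∀ R > (0:ℝ),
      IntegrableOn (fun x => F x * χ R x) Ω volume ∧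
      (∫ x in Ω, F x * χ R x) ≤ (2 * k ^ 2 + c ^ 2) * M := by
    intro R hR
    have hp0 : ∀ x, 0 ≤ χ R x := fun x => (hχ01 R hR x).1
    have hp1 : ∀ x, χ R x ≤ 1 := fun x => (hχ01 R hR x).2
    have hcont : Continuous (χ R) := (hχsmooth R hR).continuous
    have hgradcont : Continuous (fun x => gradient (χ R) x) := by
      have h1 : Continuous (fderiv ℝ (χ R)) :=
        (hχsmooth R hR).continuous_fderiv (by simp)
      exact (InnerProductSpace.toDual ℝ (EuclideanSpace ℝ (Fin 2))).symm.continuous.comp h1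
    -- integrability of F * χ R on Ω
    have hBigInt : IntegrableOn F (Ω ∩ Metric.ball 0 (R + 2)) volume := by
      refine hH1loc _ inter_subset_left (hOpen.inter Metric.isOpen_ball) ?_
      exact Metric.isBounded_ball.subset inter_subset_right
    have hIndInt' : IntegrableOn F
        (Metric.closedBall (0:EuclideanSpace ℝ (Fin 2)) (R+1) ∩ Ω) volume := by
      refine hBigInt.mono_set ?_
      rintro x ⟨hx1, hx2⟩
      have h1 : dist x 0 ≤ R + 1 := hx1
      exact ⟨hx2, by simp only [Metric.mem_ball]; linarith⟩
    have hIndInt : IntegrableOn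
        ((Metric.closedBall (0:EuclideanSpace ℝ (Fin 2)) (R+1)).indicator F) Ω volume := by
      rw [IntegrableOn, integrable_indicator_iff measurableSet_closedBall]
      rwa [IntegrableOn, Measure.restrict_restrict measurableSet_closedBall]
    have hf1 : IntegrableOn (fun x => F x * χ R x) Ω volume := by
      refine Integrable.mono' hIndInt ((hFmeas.mul hcont.measurable).aestronglyMeasurable.restrict) ?_
      refine Filter.Eventually.of_forall fun x => ?_
      by_cases hx : x ∈ Metric.closedBall (0:EuclideanSpace ℝ (Fin 2)) (R+1)
      · rw [indicator_of_mem hx]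
        have h1 : 0 ≤ F x * χ R x := mul_nonneg (hFnn x) (hp0 x)
        rw [Real.norm_of_nonneg h1]
        exact mul_le_of_le_one_right (hFnn x) (hp1 x)
      · rw [indicator_of_notMem hx, hχ0 R hR x hx]
        simp
    have hI2int : IntegrableOn (fun x => ‖v x‖ ^ 2 * χ R x) Ω volume := by
      refine Integrable.mono' hL2 (hL2.aestronglyMeasurable.mul hcont.aestronglyMeasurable.restrict) ?_
      refine Filter.Eventually.of_forall fun x => ?_
      have h1 : 0 ≤ ‖v x‖ ^ 2 * χ R x := mul_nonneg (by positivity) (hp0 x)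
      rw [Real.norm_of_nonneg h1]
      exact mul_le_of_le_one_right (by positivity) (hp1 x)
    have hI2le : (∫ x in Ω, ‖v x‖ ^ 2 * χ R x) ≤ M := by
      refine integral_mono hI2int hL2 fun x => ?_
      exact mul_le_of_le_one_right (by positivity) (hp1 x)
    have hI2nonneg : (0:ℝ) ≤ ∫ x in Ω, ‖v x‖ ^ 2 * χ R x :=
      integral_nonneg fun x => mul_nonneg (by positivity) (hp0 x)
    -- the complex cross term
    set g : EuclideanSpace ℝ (Fin 2) → ℂ := fun x => (starRingEnd ℂ) (v x) * fderiv ℝ v x (gradient (χ R) x) with hg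
    have hgw : g = fun x => (starRingEnd ℂ) (w x) * fderiv ℝ v x (gradient (χ R) x) := by
      funext x
      by_cases hx : x ∈ D
      · simp [hg, hw, indicator_of_mem hx]
      · have h0 : fderiv ℝ v x = 0 := fderiv_zero_of_not_differentiableAt hx
        simp [hg, hw, indicator_of_notMem hx, h0]
    have happlymeas : Measurable (fun x => fderiv ℝ v x (gradient (χ R) x)) := by
      have h1 : Measurable (fun x => (fderiv ℝ v x, gradient (χ R) x)) :=
        (measurable_fderiv ℝ v).prodMk hgradcont.measurable
      exact ((isBoundedBilinearMap_apply (𝕜 := ℝ) (E := EuclideanSpace ℝ (Fin 2)) (F := ℂ)).continuous.measurable).comp h1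
    have hgmeas : AEMeasurable g volume := by
      rw [hgw]
      have h1 : AEMeasurable (fun x => star (w x)) volume :=
        continuous_star.measurable.comp_aemeasurable hwmeas
      simp only [starRingEnd_apply]
      exact h1.mul happlymeas.aemeasurable
    have hbound : ∀ x, ‖g x‖ ≤ c ^ 2 / 2 * ‖v x‖ ^ 2 + 1 / 2 * (F x * χ R x) := by
      intro x
      have h1 : ‖g x‖ = ‖v x‖ * ‖fderiv ℝ v x (gradient (χ R) x)‖ := by
        rw [hg]; simp [norm_mul]
      have h2 : ‖fderiv ℝ v x (gradient (χ R) x)‖ ≤ ‖fderiv ℝ v x‖ * ‖gradient (χ R) x‖ :=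
        (fderiv ℝ v x).le_opNorm _
      have h3 : ‖gradient (χ R) x‖ ≤ c * Real.sqrt (χ R x) := hχgrad R hR x
      have h4 : Real.sqrt (χ R x) ^ 2 = χ R x := Real.sq_sqrt (hp0 x)
      have h5 : 0 ≤ Real.sqrt (χ R x) := Real.sqrt_nonneg _
      have h6 : 0 ≤ ‖v x‖ := norm_nonneg _
      have h7 : 0 ≤ ‖fderiv ℝ v x‖ := norm_nonneg _
      have h8 : ‖g x‖ ≤ ‖v x‖ * (‖fderiv ℝ v x‖ * (c * Real.sqrt (χ R x))) := by
        rw [h1]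
        refine mul_le_mul_of_nonneg_left (le_trans h2 ?_) h6
        exact mul_le_mul_of_nonneg_left h3 h7
      rw [hF]
      nlinarith [sq_nonneg (c * ‖v x‖ - ‖fderiv ℝ v x‖ * Real.sqrt (χ R x))]
    have hbd_int : IntegrableOn
        (fun x => c ^ 2 / 2 * ‖v x‖ ^ 2 + 1 / 2 * (F x * χ R x)) Ω volume :=
      (hL2.const_mul _).add (hf1.const_mul _)
    have hgint : IntegrableOn g Ω volume := by
      refine Integrable.mono' hbd_int (hgmeas.aestronglyMeasurable.restrict) ?_
      exact Filter.Eventually.of_forall hbound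
    -- split the Green identity
    have hofreal : Integrable (fun x => ((F x * χ R x : ℝ) : ℂ)) (volume.restrict Ω) :=
      hf1.ofReal
    have hGr := hGreen R hR
    have hor : (∫ x in Ω, ((F x * χ R x : ℝ) : ℂ))
        = ((∫ x in Ω, F x * χ R x : ℝ) : ℂ) := integral_ofReal
    have hsplit : (∫ x in Ω, (((F x * χ R x : ℝ)) : ℂ) + g x)
        = ((∫ x in Ω, F x * χ R x : ℝ) : ℂ) + ∫ x in Ω, g x := by
      rw [integral_add hofreal hgint, hor]
    rw [hsplit] at hGr
    have hre : (∫ x in Ω, F x * χ R x) + (∫ x in Ω, g x).re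
        = k ^ 2 * ∫ x in Ω, ‖v x‖ ^ 2 * χ R x := by
      have := congrArg Complex.re hGr
      simpa [← Complex.ofReal_pow] using this
    have hgnorm : ‖∫ x in Ω, g x‖ ≤ c ^ 2 / 2 * M + 1 / 2 * (∫ x in Ω, F x * χ R x) := by
      refine le_trans (norm_integral_le_integral_norm g) ?_
      have h1 : (∫ x in Ω, ‖g x‖)
          ≤ ∫ x in Ω, (c ^ 2 / 2 * ‖v x‖ ^ 2 + 1 / 2 * (F x * χ R x)) :=
        integral_mono hgint.norm hbd_int hbound
      refine le_trans h1 ?_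
      rw [integral_add (hL2.const_mul _) (hf1.const_mul _), integral_const_mul, integral_const_mul]
    have hre_abs : |(∫ x in Ω, g x).re| ≤ ‖∫ x in Ω, g x‖ := Complex.abs_re_le_norm _
    have hkM : k ^ 2 * (∫ x in Ω, ‖v x‖ ^ 2 * χ R x) ≤ k ^ 2 * M :=
      mul_le_mul_of_nonneg_left hI2le (by positivity)
    refine ⟨hf1, ?_⟩
    have h9 : -(c ^ 2 / 2 * M + 1 / 2 * (∫ x in Ω, F x * χ R x)) ≤ (∫ x in Ω, g x).re := by
      have := (abs_le.mp (le_trans hre_abs hgnorm)).1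
      linarith
    nlinarith [hre, hkM]
  refine ⟨2 * k ^ 2 + c ^ 2, by positivity, fun R hR => (key R hR).2, ?_⟩
  -- integrability on all of Ω by monotone convergence
  set C : ℝ := (2 * k ^ 2 + c ^ 2) * M with hC
  have hCnn : 0 ≤ C := by positivity
  -- for each n, the integral over Ω ∩ ball (n+1) is bounded by C
  have hn_int : ∀ n : ℕ, IntegrableOn F (Ω ∩ Metric.ball 0 ((n:ℝ) + 1)) volume := by
    intro n
    exact hH1loc _ inter_subset_left (hOpen.inter Metric.isOpen_ball)
      (Metric.isBounded_ball.subset inter_subset_right)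
  have hn_le : ∀ n : ℕ, (∫ x in Ω ∩ Metric.ball 0 ((n:ℝ) + 1), F x) ≤ C := by
    intro n
    have hRpos : (0:ℝ) < (n:ℝ) + 1 := by positivity
    have hcongr : (∫ x in Ω ∩ Metric.ball 0 ((n:ℝ) + 1), F x)
        = ∫ x in Ω ∩ Metric.ball 0 ((n:ℝ) + 1), F x * χ ((n:ℝ)+1) x := by
      refine setIntegral_congr_fun ((hOpen.inter Metric.isOpen_ball).measurableSet) ?_
      intro x hx
      have hx' : x ∈ Metric.closedBall (0:EuclideanSpace ℝ (Fin 2)) ((n:ℝ)+1) := Metric.ball_subset_closedBall hx.2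
      show F x = F x * χ ((n:ℝ)+1) x
      rw [hχ1 ((n:ℝ)+1) hRpos x hx', mul_one]
    rw [hcongr]
    have hmono : (∫ x in Ω ∩ Metric.ball 0 ((n:ℝ) + 1), F x * χ ((n:ℝ)+1) x)
        ≤ ∫ x in Ω, F x * χ ((n:ℝ)+1) x := by
      refine setIntegral_mono_set (key _ hRpos).1 ?_ ?_
      · exact Filter.Eventually.of_forall fun x =>
          mul_nonneg (hFnn x) (hχ01 _ hRpos x).1
      · exact HasSubset.Subset.eventuallyLE inter_subset_left
    exact le_trans hmono (key _ hRpos).2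
  -- assemble integrability
  refine ⟨hFmeas.aestronglyMeasurable.restrict, ?_⟩
  rw [hasFiniteIntegral_iff_ofReal (Filter.Eventually.of_forall hFnn)]
  set φ : ℕ → EuclideanSpace ℝ (Fin 2) → ENNReal := fun n =>
    (Metric.ball (0:EuclideanSpace ℝ (Fin 2)) ((n:ℝ)+1)).indicator (fun x => ENNReal.ofReal (F x)) with hφ
  have hφmeas : ∀ n, Measurable (φ n) := fun n =>
    (hFmeas.ennreal_ofReal).indicator Metric.isOpen_ball.measurableSet
  have hφmono : Monotone φ := by
    intro m n hmn
    refine indicator_le_indicator_of_subset (Metric.ball_subset_ball ?_) (fun x => zero_le)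
    have : (m:ℝ) ≤ (n:ℝ) := Nat.cast_le.mpr hmn
    linarith
  have hφsup : ∀ x, (⨆ n, φ n x) = ENNReal.ofReal (F x) := by
    intro x
    refine le_antisymm (iSup_le fun n => indicator_le_self' (fun _ _ => zero_le) x) ?_
    obtain ⟨n, hn⟩ := exists_nat_gt ‖x‖
    have hx : x ∈ Metric.ball (0:EuclideanSpace ℝ (Fin 2)) ((n:ℝ)+1) := by
      rw [Metric.mem_ball, dist_zero_right]
      linarith
    refine le_trans (le_of_eq ?_) (le_iSup (fun n => φ n x) n)
    rw [hφ]
    simp [indicator_of_mem hx]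
  have hlin : (∫⁻ x in Ω, ENNReal.ofReal (F x)) = ⨆ n, ∫⁻ x in Ω, φ n x := by
    rw [← lintegral_iSup hφmeas hφmono]
    exact lintegral_congr fun x => (hφsup x).symm
  rw [hlin]
  have hφn : ∀ n : ℕ, (∫⁻ x in Ω, φ n x) ≤ ENNReal.ofReal C := by
    intro n
    rw [hφ]
    rw [lintegral_indicator Metric.isOpen_ball.measurableSet,
      Measure.restrict_restrict Metric.isOpen_ball.measurableSet]
    have heq : volume.restrict (Metric.ball (0:EuclideanSpace ℝ (Fin 2)) ((n:ℝ)+1) ∩ Ω)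
        = volume.restrict (Ω ∩ Metric.ball (0:EuclideanSpace ℝ (Fin 2)) ((n:ℝ)+1)) := by rw [inter_comm]
    rw [heq]
    rw [← ofReal_integral_eq_lintegral_ofReal (hn_int n)
      (Filter.Eventually.of_forall hFnn)]
    exact ENNReal.ofReal_le_ofReal (hn_le n)
  exact lt_of_le_of_lt (iSup_le hφn) ENNReal.ofReal_lt_top
end

section
/- Suppose |H(x₁,x₂)| ≤ C x₁ [(x₁²+x₂²)^{−1} + (x₁²+x₂²)^{−3/4}] for x₁ > 0. Then for all x₁ > 0 and a > 0, ∫₀^a |H(x₁,s)| ds ≤ C'' (1+x₁)^{1/2} · min(1, a/x₁), where C'' depends only on C. -/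
/-!
The substitution `s = x₁ t` turns `x₁ ∫₀^a (x₁² + s²)^(-p) ds` into
`x₁^(2 - 2p) ∫₀^(a/x₁) (1 + t²)^(-p) dt`, and for `p > 1/2` the last integral is
`O(min 1 (a/x₁))`: its integrand is at most `1`, and at most `t^(-2p)`, which is integrable
at infinity. The two terms of the bound on `H` are the cases `p = 1` and `p = 3/4`,
with prefactors `1` and `√x₁`.
-/

open Set MeasureTheory intervalIntegral

lemma continuous_add_sq_rpow {c : ℝ} (hc : 0 < c) (p : ℝ) :
    Continuous fun t : ℝ => (c + t ^ 2) ^ (-p) :=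
  (continuous_const.add (continuous_pow 2)).rpow_const fun t =>
    Or.inl (by positivity : 0 < c + t ^ 2).ne'

lemma integral_one_add_sq_rpow_neg_le {p : ℝ} (hp : 1 / 2 < p) {T : ℝ} (hT : 0 ≤ T) :
    ∫ t in (0:ℝ)..T, (1 + t ^ 2) ^ (-p) ≤ (1 + (2 * p - 1)⁻¹) * min 1 T := by
  have hq : 0 < 2 * p - 1 := by linarith
  have hint : ∀ b c : ℝ, IntervalIntegrable (fun t : ℝ => (1 + t ^ 2) ^ (-p)) volume b c :=
    fun b c => (continuous_add_sq_rpow one_pos p).intervalIntegrable b c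
  have hle_one : ∀ b, 0 ≤ b → ∫ t in (0:ℝ)..b, (1 + t ^ 2) ^ (-p) ≤ b := fun b hb => by
    simpa using integral_mono_on hb (hint 0 b) intervalIntegrable_const fun t _ =>
      Real.rpow_le_one_of_one_le_of_nonpos (by nlinarith) (by linarith)
  rcases le_or_gt T 1 with hT1 | hT1
  · rw [min_eq_right hT1]
    nlinarith [hle_one T hT, inv_pos.2 hq]
  · have hnot0 : (0:ℝ) ∉ uIcc 1 T := by simp [uIcc_of_le hT1.le]
    have htail : ∫ t in (1:ℝ)..T, (1 + t ^ 2) ^ (-p) ≤ (2 * p - 1)⁻¹ := by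
      calc ∫ t in (1:ℝ)..T, (1 + t ^ 2) ^ (-p) ≤ ∫ t in (1:ℝ)..T, t ^ (-2 * p) := by
            refine integral_mono_on hT1.le (hint 1 T)
              (intervalIntegrable_rpow (Or.inr hnot0)) fun t ht => ?_
            have ht0 : 0 < t := by linarith [ht.1]
            rw [show t ^ (-2 * p) = (t ^ 2) ^ (-p) by
              rw [← Real.rpow_two, ← Real.rpow_mul ht0.le]; ring_nf]
            exact Real.rpow_le_rpow_of_nonpos (by positivity) (by linarith) (by linarith)
        _ = (1 - T ^ (1 - 2 * p)) / (2 * p - 1) := by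
            rw [integral_rpow (Or.inr ⟨by linarith, hnot0⟩), Real.one_rpow,
              show -2 * p + 1 = -(2 * p - 1) by ring, div_neg, ← neg_div, neg_sub,
              show -(2 * p - 1) = 1 - 2 * p by ring]
        _ ≤ (2 * p - 1)⁻¹ := by
            rw [div_eq_mul_inv]
            nlinarith [Real.rpow_nonneg hT (1 - 2 * p), inv_pos.2 hq]
    rw [min_eq_left hT1.le, ← integral_add_adjacent_intervals (hint 0 1) (hint 1 T)]
    linarith [hle_one 1 zero_le_one]

lemma integral_mul_sq_add_sq_rpow_neg {x : ℝ} (hx : 0 < x) (p a : ℝ) :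
    ∫ s in (0:ℝ)..a, x * (x ^ 2 + s ^ 2) ^ (-p) =
      x ^ (2 - 2 * p) * ∫ t in (0:ℝ)..a / x, (1 + t ^ 2) ^ (-p) := by
  have hscale (s : ℝ) :
      x * (x ^ 2 + s ^ 2) ^ (-p) = x ^ (1 - 2 * p) * (1 + (s / x) ^ 2) ^ (-p) := by
    rw [show x ^ 2 + s ^ 2 = x ^ 2 * (1 + (s / x) ^ 2) by field_simp,
      Real.mul_rpow (by positivity) (by positivity), ← Real.rpow_two, ← Real.rpow_mul hx.le,
      ← mul_assoc, sub_eq_add_neg, Real.rpow_add hx, Real.rpow_one, mul_neg]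
  simp_rw [hscale]
  rw [intervalIntegral.integral_const_mul, integral_comp_div (fun t => (1 + t ^ 2) ^ (-p)) hx.ne',
    zero_div, smul_eq_mul, ← mul_assoc, ← Real.rpow_add_one hx.ne']
  ring_nf

lemma integral_mul_sq_add_sq_rpow_neg_le {p : ℝ} (hp : 1 / 2 < p) {x a : ℝ} (hx : 0 < x)
    (ha : 0 ≤ a) :
    ∫ s in (0:ℝ)..a, x * (x ^ 2 + s ^ 2) ^ (-p) ≤
      (1 + (2 * p - 1)⁻¹) * x ^ (2 - 2 * p) * min 1 (a / x) := by
  rw [integral_mul_sq_add_sq_rpow_neg hx, mul_comm _ (x ^ _), mul_assoc]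
  exact mul_le_mul_of_nonneg_left (integral_one_add_sq_rpow_neg_le hp (by positivity))
    (by positivity)

lemma one_add_sqrt_le_two_mul_sqrt_one_add {x : ℝ} (hx : 0 ≤ x) :
    1 + √x ≤ 2 * √(1 + x) := by
  have h1 : 1 ≤ √(1 + x) := Real.one_le_sqrt.2 (by linarith)
  have h2 : √x ≤ √(1 + x) := Real.sqrt_le_sqrt (by linarith)
  linarith

/-- If `|H(x₁,x₂)| ≤ C x₁ [(x₁²+x₂²)⁻¹ + (x₁²+x₂²)^{−3/4}]` for `x₁ > 0`, then
`∫₀^a |H(x₁,s)| ds ≤ C'' (1+x₁)^{1/2} min(1, a/x₁)`, with `C''` depending only on `C`. -/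
theorem stmt_7 (C : ℝ) (hC : 0 < C) :
    ∃ C'' > (0:ℝ), ∀ H : ℝ → ℝ → ℂ,
      (∀ x₁ x₂ : ℝ, 0 < x₁ →
        ‖H x₁ x₂‖ ≤ C * x₁ * ((x₁ ^ 2 + x₂ ^ 2)⁻¹ + (x₁ ^ 2 + x₂ ^ 2) ^ (-(3:ℝ)/4))) →
      ∀ x₁ : ℝ, 0 < x₁ → ∀ a : ℝ, 0 < a →
        (∫ s in Ioc (0:ℝ) a, ‖H x₁ s‖) ≤
          C'' * Real.sqrt (1 + x₁) * min 1 (a / x₁) := by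
  refine ⟨6 * C, by positivity, fun H hH x hx a ha => ?_⟩
  set f : ℝ → ℝ → ℝ := fun p s => x * (x ^ 2 + s ^ 2) ^ (-p)
  have hHf (s : ℝ) : ‖H x s‖ ≤ C * (f 1 s + f (3 / 4) s) := by
    convert hH x s hx using 1
    simp only [f, Real.rpow_neg_one, neg_div]
    ring
  have hf_cont (p : ℝ) : Continuous (f p) :=
    continuous_const.mul (continuous_add_sq_rpow (by positivity) p)
  have hf1 : ∫ s in (0:ℝ)..a, f 1 s ≤ 2 * min 1 (a / x) := by
    convert integral_mul_sq_add_sq_rpow_neg_le (p := 1) (by norm_num) hx ha.le using 2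
    norm_num
  have hf2 : ∫ s in (0:ℝ)..a, f (3 / 4) s ≤ 3 * √x * min 1 (a / x) := by
    convert integral_mul_sq_add_sq_rpow_neg_le (p := 3 / 4) (by norm_num) hx ha.le using 2
    norm_num [Real.sqrt_eq_rpow]
  have hm : 0 ≤ min 1 (a / x) := le_min zero_le_one (by positivity)
  calc ∫ s in Ioc (0:ℝ) a, ‖H x s‖
      ≤ ∫ s in Ioc (0:ℝ) a, C * (f 1 s + f (3 / 4) s) :=
        integral_mono_of_nonneg (.of_forall fun s => norm_nonneg _)
          (((hf_cont 1).add (hf_cont _)).const_smul C).integrableOn_Ioc (.of_forall hHf)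
    _ = C * ((∫ s in (0:ℝ)..a, f 1 s) + ∫ s in (0:ℝ)..a, f (3 / 4) s) := by
        rw [← integral_of_le ha.le, intervalIntegral.integral_const_mul,
          integral_add ((hf_cont 1).intervalIntegrable _ _) ((hf_cont _).intervalIntegrable _ _)]
    _ ≤ C * (3 * (1 + √x) * min 1 (a / x)) := by
        gcongr
        nlinarith
    _ ≤ 6 * C * √(1 + x) * min 1 (a / x) := by
        nlinarith [mul_nonneg (mul_nonneg hC.le hm)
          (sub_nonneg.2 (one_add_sqrt_le_two_mul_sqrt_one_add hx.le))]
end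

section
/- Suppose φ ∈ L^∞(ℝ) satisfies |φ(t)| ≤ (1+|t|)^{−p} for some p > 1, and let u(x) = ∫_ℝ H(k; x₁, x₂−t) φ(t) dt for x = (x₁,x₂) in the half-plane ℝ²₊ = (0,∞)×ℝ, where H(k;x₁,x₂) = (i k x₁/2)·H₁⁽¹⁾(k|x|)/|x| and k > 0. Then there is a constant C(p) > 0 such that |u(x)| ≤ C(p)(1+|x|)^{−1/2} for all x ∈ ℝ²₊. -/
/-!
Bound the kernel by `C · k(x₁, s)` with `k(a, s) = a/(a²+s²) · (1 + (a²+s²)^{1/4})`. By scaling,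
`∫ k(a, s) ds = π + c √a`, which grows like `|x|^{1/2}`. For each `t`, either `1 + |t| ≥ (1+|x|)/2`,
so the weight `(1+|t|)^{-p}` is `O((1+|x|)^{-p})`, or the point `(x₁, x₂ - t)` lies at distance at
least `(1+|x|)/2` from the origin, where `k = O((1+|x|)^{-1/2})`. Splitting the integrand pointwise
accordingly gives `O((1+|x|)^{1/2-p}) + O((1+|x|)^{-1/2})`, and `p > 1` finishes.
-/

open MeasureTheory Real

lemma integrable_one_add_sq_rpow_neg {α : ℝ} (hα : 1 / 2 < α) :
    Integrable fun u : ℝ => (1 + u ^ 2) ^ (-α) := by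
  have h := integrable_rpow_neg_one_add_norm_sq (E := ℝ) (μ := volume) (r := 2 * α)
    (by simp; linarith)
  simpa [Real.norm_eq_abs, sq_abs, neg_div, mul_div_cancel_left₀ _ (two_ne_zero' ℝ)] using h

lemma sq_add_sq_rpow_neg {a : ℝ} (ha : 0 < a) (α s : ℝ) :
    (a ^ 2 + s ^ 2) ^ (-α) = a ^ (-(2 * α)) * (1 + (s / a) ^ 2) ^ (-α) := by
  have h : a ^ 2 + s ^ 2 = a ^ 2 * (1 + (s / a) ^ 2) := by field_simp
  rw [h, mul_rpow (by positivity) (by positivity), ← rpow_natCast, ← rpow_mul ha.le]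
  norm_num

lemma integrable_sq_add_sq_rpow_neg {α : ℝ} (hα : 1 / 2 < α) {a : ℝ} (ha : 0 < a) :
    Integrable fun s : ℝ => (a ^ 2 + s ^ 2) ^ (-α) := by
  simpa only [sq_add_sq_rpow_neg ha] using
    ((integrable_one_add_sq_rpow_neg hα).comp_div ha.ne').const_mul (a ^ (-(2 * α)))

lemma integral_sq_add_sq_rpow_neg {a : ℝ} (ha : 0 < a) (α : ℝ) :
    ∫ s : ℝ, (a ^ 2 + s ^ 2) ^ (-α) = a ^ (1 - 2 * α) * ∫ u : ℝ, (1 + u ^ 2) ^ (-α) := by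
  simp only [sq_add_sq_rpow_neg ha]
  rw [integral_const_mul, Measure.integral_comp_div (fun u => (1 + u ^ 2) ^ (-α)),
    abs_of_pos ha, smul_eq_mul, ← mul_assoc, sub_eq_neg_add, rpow_add_one ha.ne']

noncomputable def kernelMajorant (a s : ℝ) : ℝ := a / (a ^ 2 + s ^ 2) * (1 + √(√(a ^ 2 + s ^ 2)))

lemma kernelMajorant_nonneg {a : ℝ} (ha : 0 ≤ a) (s : ℝ) : 0 ≤ kernelMajorant a s := by
  unfold kernelMajorant; positivity

lemma kernelMajorant_eq {a : ℝ} (ha : 0 < a) (s : ℝ) :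
    kernelMajorant a s = a * (a ^ 2 + s ^ 2) ^ (-1 : ℝ) + a * (a ^ 2 + s ^ 2) ^ (-(3 / 4) : ℝ) := by
  have hR : 0 < a ^ 2 + s ^ 2 := by positivity
  have h4 : √(√(a ^ 2 + s ^ 2)) = (a ^ 2 + s ^ 2) ^ (1 / 4 : ℝ) := by
    rw [sqrt_eq_rpow, sqrt_eq_rpow, ← rpow_mul hR.le]; norm_num
  rw [kernelMajorant, h4, rpow_neg_one, div_eq_mul_inv,
    show (-(3 / 4) : ℝ) = -1 + 1 / 4 by norm_num, rpow_add hR, rpow_neg_one]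
  ring

lemma integrable_kernelMajorant {a : ℝ} (ha : 0 < a) : Integrable (kernelMajorant a) := by
  simp only [funext (kernelMajorant_eq ha)]
  exact ((integrable_sq_add_sq_rpow_neg (by norm_num) ha).const_mul a).add
    ((integrable_sq_add_sq_rpow_neg (by norm_num) ha).const_mul a)

lemma integral_kernelMajorant {a : ℝ} (ha : 0 < a) :
    ∫ s, kernelMajorant a s = π + √a * ∫ u : ℝ, (1 + u ^ 2) ^ (-(3 / 4) : ℝ) := by
  simp only [kernelMajorant_eq ha]
  rw [integral_add ((integrable_sq_add_sq_rpow_neg (by norm_num) ha).const_mul a)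
    ((integrable_sq_add_sq_rpow_neg (by norm_num) ha).const_mul a), integral_const_mul,
    integral_const_mul, integral_sq_add_sq_rpow_neg ha, integral_sq_add_sq_rpow_neg ha]
  have ha' : a * a ^ (1 - 2 * (3 / 4) : ℝ) = √a := by
    rw [sqrt_eq_rpow, ← rpow_one_add' ha.le (by norm_num)]; norm_num
  simp only [rpow_neg_one, integral_univ_inv_one_add_sq, ← mul_assoc, ha']
  norm_num [ha.ne', rpow_neg_one]

lemma kernelMajorant_le {a : ℝ} (ha : 0 < a) (s : ℝ) :
    kernelMajorant a s ≤ (√(a ^ 2 + s ^ 2))⁻¹ + (√(√(a ^ 2 + s ^ 2)))⁻¹ := by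
  set r := √(√(a ^ 2 + s ^ 2))
  have hr : 0 < r := by positivity
  have hR : a ^ 2 + s ^ 2 = r ^ 4 := by
    simp only [r, show (4 : ℕ) = 2 * 2 from rfl, pow_mul, sq_sqrt (sqrt_nonneg _),
      sq_sqrt (by positivity : (0 : ℝ) ≤ a ^ 2 + s ^ 2)]
  have hq : √(a ^ 2 + s ^ 2) = r ^ 2 := by rw [sq_sqrt (sqrt_nonneg _)]
  have har : a ≤ r ^ 2 := by rw [← hq]; exact le_sqrt_of_sq_le (by nlinarith)
  show a / (a ^ 2 + s ^ 2) * (1 + r) ≤ _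
  rw [hq, hR]
  calc a / r ^ 4 * (1 + r) ≤ r ^ 2 / r ^ 4 * (1 + r) := by gcongr
    _ = (r ^ 2)⁻¹ + r⁻¹ := by field_simp

lemma sqrt_sq_add_sq_sub_abs_le (a b t : ℝ) : √(a ^ 2 + b ^ 2) - |t| ≤ √(a ^ 2 + (b - t) ^ 2) := by
  have h := norm_sub_norm_le (⟨a, b⟩ : ℂ) ⟨0, t⟩
  simpa [Complex.norm_eq_sqrt_sq_add_sq, sqrt_sq_eq_abs] using h

lemma kernelMajorant_le_of_le {a L s : ℝ} (ha : 0 < a) (hL : 1 ≤ L)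
    (hs : L / 2 ≤ √(a ^ 2 + s ^ 2)) : kernelMajorant a s ≤ 4 / √L := by
  have hL' : √L ≤ L := sqrt_le_self_iff.2 (Or.inr hL)
  have h1 : (√(a ^ 2 + s ^ 2))⁻¹ ≤ 2 / √L := by
    rw [inv_le_comm₀ (by linarith) (by positivity), inv_div]
    linarith
  have h2 : (√(√(a ^ 2 + s ^ 2)))⁻¹ ≤ 2 / √L := by
    rw [inv_le_comm₀ (by positivity) (by positivity), inv_div]
    calc √L / 2 ≤ √(L / 2) := by
          rw [le_sqrt (by positivity) (by linarith), div_pow, sq_sqrt (by linarith)]; linarith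
      _ ≤ √(√(a ^ 2 + s ^ 2)) := sqrt_le_sqrt hs
  calc kernelMajorant a s ≤ (√(a ^ 2 + s ^ 2))⁻¹ + (√(√(a ^ 2 + s ^ 2)))⁻¹ :=
        kernelMajorant_le ha s
    _ ≤ 2 / √L + 2 / √L := add_le_add h1 h2
    _ = 4 / √L := by ring

lemma kernelMajorant_mul_weight_le {p a L : ℝ} (hp : 0 ≤ p) (ha : 0 < a) (b t : ℝ) (hL : 1 ≤ L)
    (hLρ : L ≤ 1 + √(a ^ 2 + b ^ 2)) :
    kernelMajorant a (b - t) * (1 + |t|) ^ (-p) ≤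
      2 ^ p * L ^ (-p) * kernelMajorant a (b - t) + 4 / √L * (1 + |t|) ^ (-p) := by
  have hK := kernelMajorant_nonneg ha.le (b - t)
  have hw : 0 ≤ (1 + |t|) ^ (-p) := by positivity
  rcases le_or_gt (L / 2) (1 + |t|) with ht | ht
  · have hwL : (1 + |t|) ^ (-p) ≤ 2 ^ p * L ^ (-p) := by
      calc (1 + |t|) ^ (-p) ≤ (L / 2) ^ (-p) :=
            rpow_le_rpow_of_nonpos (by linarith) ht (by linarith)
        _ = 2 ^ p * L ^ (-p) := by
          rw [div_rpow (by linarith) two_pos.le, rpow_neg two_pos.le, div_inv_eq_mul, mul_comm]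
    have : 0 ≤ 4 / √L * (1 + |t|) ^ (-p) := by positivity
    nlinarith
  · have hKL : kernelMajorant a (b - t) ≤ 4 / √L :=
      kernelMajorant_le_of_le ha hL (by linarith [sqrt_sq_add_sq_sub_abs_le a b t])
    have : 0 ≤ 2 ^ p * L ^ (-p) * kernelMajorant a (b - t) := by positivity
    nlinarith

lemma integrable_one_add_abs_rpow_neg {p : ℝ} (hp : 1 < p) :
    Integrable fun t : ℝ => (1 + |t|) ^ (-p) := by
  simpa only [Real.norm_eq_abs] using
    integrable_one_add_norm (E := ℝ) (μ := volume) (by simpa using hp)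

lemma integrable_kernelMajorant_mul_weight {p a : ℝ} (hp : 1 < p) (ha : 0 < a) (b : ℝ) :
    Integrable fun t => kernelMajorant a (b - t) * (1 + |t|) ^ (-p) :=
  ((integrable_kernelMajorant ha).comp_sub_left b).mul_bdd (c := 1)
    (by fun_prop : Measurable fun t : ℝ => (1 + |t|) ^ (-p)).aestronglyMeasurable
    (ae_of_all _ fun t => by
      rw [norm_of_nonneg (by positivity)]
      exact rpow_le_one_of_one_le_of_nonpos (by simp) (by linarith))

lemma integral_kernelMajorant_mul_weight_le {p a : ℝ} (hp : 1 < p) (ha : 0 < a) (b : ℝ) :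
    ∫ t, kernelMajorant a (b - t) * (1 + |t|) ^ (-p) ≤
      (2 ^ p * (π + ∫ u : ℝ, (1 + u ^ 2) ^ (-(3 / 4) : ℝ)) + 4 * ∫ t : ℝ, (1 + |t|) ^ (-p)) /
        √(1 + √(a ^ 2 + b ^ 2)) := by
  set L := 1 + √(a ^ 2 + b ^ 2)
  set c := ∫ u : ℝ, (1 + u ^ 2) ^ (-(3 / 4) : ℝ)
  have hc : 0 ≤ c := by positivity
  have hL : 1 ≤ L := by simp only [L]; linarith [sqrt_nonneg (a ^ 2 + b ^ 2)]
  have hK := (integrable_kernelMajorant ha).comp_sub_left b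
  have hw := integrable_one_add_abs_rpow_neg hp
  have hpow : L ^ (-p) * √L ≤ (√L)⁻¹ := by
    calc L ^ (-p) * √L ≤ L ^ (-1 : ℝ) * √L := by gcongr
      _ = (√L)⁻¹ := by
          have hsL : 0 < √L := by positivity
          nth_rw 1 [rpow_neg_one, ← mul_self_sqrt (by linarith : (0 : ℝ) ≤ L)]
          field_simp
  have hsa : √a ≤ √L := sqrt_le_sqrt (by
    linarith [abs_le_sqrt (by nlinarith : a ^ 2 ≤ a ^ 2 + b ^ 2), le_abs_self a])
  have hsL : 1 ≤ √L := one_le_sqrt.2 hL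
  calc ∫ t, kernelMajorant a (b - t) * (1 + |t|) ^ (-p)
      ≤ ∫ t, (2 ^ p * L ^ (-p) * kernelMajorant a (b - t) + 4 / √L * (1 + |t|) ^ (-p)) :=
        integral_mono (integrable_kernelMajorant_mul_weight hp ha b)
          ((hK.const_mul _).add (hw.const_mul _))
          fun t => kernelMajorant_mul_weight_le (by linarith) ha b t hL le_rfl
    _ = 2 ^ p * L ^ (-p) * (π + √a * c) + 4 / √L * ∫ t : ℝ, (1 + |t|) ^ (-p) := by
        rw [integral_add (hK.const_mul _) (hw.const_mul _), integral_const_mul, integral_const_mul,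
          integral_sub_left_eq_self (kernelMajorant a), integral_kernelMajorant ha]
    _ ≤ 2 ^ p * L ^ (-p) * ((π + c) * √L) + 4 / √L * ∫ t : ℝ, (1 + |t|) ^ (-p) := by
        gcongr
        nlinarith [pi_pos]
    _ ≤ 2 ^ p * (π + c) * (√L)⁻¹ + 4 / √L * ∫ t : ℝ, (1 + |t|) ^ (-p) := by
        rw [show 2 ^ p * L ^ (-p) * ((π + c) * √L) = 2 ^ p * (π + c) * (L ^ (-p) * √L) by ring]
        gcongr
    _ = _ := by ring

theorem stmt_10_general (p C : ℝ) (hp : 1 < p) (hC : 0 < C)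
    (H : ℝ → ℝ → ℂ)
    (hH : ∀ x₁ x₂ : ℝ, 0 < x₁ →
      ‖H x₁ x₂‖ ≤ C * (x₁ / (x₁ ^ 2 + x₂ ^ 2)) *
        (1 + Real.sqrt (Real.sqrt (x₁ ^ 2 + x₂ ^ 2)))) :
    ∃ Cp > (0:ℝ), ∀ φ : ℝ → ℂ, (∀ t : ℝ, ‖φ t‖ ≤ (1 + |t|) ^ (-p)) →
      ∀ x₁ x₂ : ℝ, 0 < x₁ →
        ‖∫ t : ℝ, H x₁ (x₂ - t) * φ t‖ ≤
          Cp * (1 + Real.sqrt (x₁ ^ 2 + x₂ ^ 2)) ^ (-(1:ℝ)/2) := by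
  refine ⟨C * (2 ^ p * (π + ∫ u : ℝ, (1 + u ^ 2) ^ (-(3 / 4) : ℝ)) +
    4 * ∫ t : ℝ, (1 + |t|) ^ (-p)), by positivity, fun φ hφ x₁ x₂ hx₁ => ?_⟩
  have hHφ (t : ℝ) :
      ‖H x₁ (x₂ - t) * φ t‖ ≤ C * (kernelMajorant x₁ (x₂ - t) * (1 + |t|) ^ (-p)) := by
    rw [norm_mul, ← mul_assoc]
    exact mul_le_mul (by rw [kernelMajorant, ← mul_assoc]; exact hH x₁ (x₂ - t) hx₁) (hφ t)
      (norm_nonneg _) (mul_nonneg hC.le (kernelMajorant_nonneg hx₁.le _))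
  calc ‖∫ t : ℝ, H x₁ (x₂ - t) * φ t‖
      ≤ C * ∫ t, kernelMajorant x₁ (x₂ - t) * (1 + |t|) ^ (-p) := by
        rw [← integral_const_mul]; exact norm_integral_le_of_norm_le
          ((integrable_kernelMajorant_mul_weight hp hx₁ x₂).const_mul C) (ae_of_all _ hHφ)
    _ ≤ _ := by
        rw [neg_div, rpow_neg (by positivity), ← sqrt_eq_rpow, ← div_eq_mul_inv, mul_div_assoc]
        gcongr
        exact integral_kernelMajorant_mul_weight_le hp hx₁ x₂

/-- Lemma 3.2 of the paper: the half-plane Dirichlet solution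
`u(x) = ∫ H(k;x₁,x₂−t) φ(t) dt`, where the double-layer kernel satisfies the Hankel
function bound `|H(k;x₁,x₂)| ≤ C (x₁/|x|²)(1+|x|^{1/2})`, with boundary data decaying
like `|φ(t)| ≤ (1+|t|)^{−p}` for some `p > 1`, satisfies
`|u(x)| ≤ C(p)(1+|x|)^{−1/2}` uniformly in the half-plane `x₁ > 0`. -/
theorem stmt_10 (k p C : ℝ) (hk : 0 < k) (hp : 1 < p) (hC : 0 < C)
    (H : ℝ → ℝ → ℂ)
    (hH : ∀ x₁ x₂ : ℝ, 0 < x₁ →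
      ‖H x₁ x₂‖ ≤ C * (x₁ / (x₁ ^ 2 + x₂ ^ 2)) *
        (1 + Real.sqrt (Real.sqrt (x₁ ^ 2 + x₂ ^ 2)))) :
    ∃ Cp > (0:ℝ), ∀ φ : ℝ → ℂ, (∀ t : ℝ, ‖φ t‖ ≤ (1 + |t|) ^ (-p)) →
      ∀ x₁ x₂ : ℝ, 0 < x₁ →
        ‖∫ t : ℝ, H x₁ (x₂ - t) * φ t‖ ≤
          Cp * (1 + Real.sqrt (x₁ ^ 2 + x₂ ^ 2)) ^ (-(1:ℝ)/2) :=
  stmt_10_general p C hp hC H hH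
end
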